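/- The two-level nested array with parameters N₁, N₂ ≥ 1, S = {0,1,…,N₁−1} ∪ {n(N₁+1)−1 : n = 1,…,N₂}, has a hole-free difference coarray: D(S) equals the integer interval [−(N₂(N₁+1)−1), N₂(N₁+1)−1], so DoF = 2N₂(N₁+1) − 1. -/

import Mathlib

/-!
Every sensor lies in `[0, M]` with `M = N₂(N₁+1) - 1`, so `D(S) ⊆ [-M, M]`, and `D(S)` is
symmetric. For `0 ≤ d ≤ M` write `d = q(N₁+1) + r` with `0 ≤ r ≤ N₁`; then
`d = ((q+1)(N₁+1) - 1) - (N₁ - r)`, a difference of a sparse sensor and an element of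
`{0, …, N₁}`, which lies in `S` because `N₁ = 1·(N₁+1) - 1` is the first sparse sensor.
-/

/-- Difference coarray of a finite set of integer sensor positions. -/
def diffCoarray (S : Finset ℤ) : Finset ℤ :=
  (S ×ˢ S).image (fun p => p.1 - p.2)

open Finset

theorem mem_diffCoarray {S : Finset ℤ} {d : ℤ} :
    d ∈ diffCoarray S ↔ ∃ a ∈ S, ∃ b ∈ S, a - b = d := by
  simp [diffCoarray, and_assoc]

theorem neg_mem_diffCoarray {S : Finset ℤ} {d : ℤ} (h : d ∈ diffCoarray S) :
    -d ∈ diffCoarray S := by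
  obtain ⟨a, ha, b, hb, rfl⟩ := mem_diffCoarray.1 h
  exact mem_diffCoarray.2 ⟨b, hb, a, ha, by ring⟩

theorem diffCoarray_eq_Icc {S : Finset ℤ} {M : ℤ} (hS : S ⊆ Icc 0 M)
    (hcover : ∀ d ∈ Icc 0 M, d ∈ diffCoarray S) : diffCoarray S = Icc (-M) M := by
  ext d
  rw [mem_Icc]
  constructor
  · intro hd
    obtain ⟨a, ha, b, hb, rfl⟩ := mem_diffCoarray.1 hd
    have ha' := mem_Icc.1 (hS ha)
    have hb' := mem_Icc.1 (hS hb)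
    omega
  · intro hd
    rcases le_total 0 d with hd0 | hd0
    · exact hcover d (mem_Icc.2 ⟨hd0, hd.2⟩)
    · simpa using neg_mem_diffCoarray (hcover (-d) (mem_Icc.2 ⟨by omega, by omega⟩))

theorem card_Icc_neg_natCast_sub_one (K : ℕ) :
    (Icc (-((K : ℤ) - 1)) ((K : ℤ) - 1)).card = 2 * K - 1 := by
  rw [Int.card_Icc]
  omega

def nestedArray (N₁ N₂ : ℕ) : Finset ℤ :=
  (range N₁).image (fun n : ℕ => (n : ℤ)) ∪
    (Icc 1 N₂).image (fun n : ℕ => (n : ℤ) * (N₁ + 1) - 1)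

section nestedArray

variable {N₁ N₂ : ℕ}

theorem mul_sub_one_mem_nestedArray {m : ℕ} (h1 : 1 ≤ m) (h2 : m ≤ N₂) :
    (m : ℤ) * (N₁ + 1) - 1 ∈ nestedArray N₁ N₂ :=
  mem_union_right _ (mem_image_of_mem _ (mem_Icc.2 ⟨h1, h2⟩))

theorem mem_nestedArray_of_le (hN₂ : 1 ≤ N₂) {x : ℤ} (h0 : 0 ≤ x) (hx : x ≤ N₁) :
    x ∈ nestedArray N₁ N₂ := by
  rcases hx.lt_or_eq with hlt | rfl
  · lift x to ℕ using h0
    exact mem_union_left _ (mem_image_of_mem _ (mem_range.2 (by exact_mod_cast hlt)))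
  · simpa using mul_sub_one_mem_nestedArray (N₁ := N₁) le_rfl hN₂

theorem nestedArray_subset_Icc (hN₂ : 1 ≤ N₂) :
    nestedArray N₁ N₂ ⊆ Icc 0 ((N₂ : ℤ) * (N₁ + 1) - 1) := by
  intro x hx
  simp only [nestedArray, mem_union, mem_image, mem_range, mem_Icc] at hx
  rw [mem_Icc]
  rcases hx with ⟨n, hn, rfl⟩ | ⟨m, ⟨h1, h2⟩, rfl⟩
  · have hn' : (n : ℤ) + 1 ≤ N₁ := by exact_mod_cast hn
    have hN₂' : (1 : ℤ) ≤ N₂ := by exact_mod_cast hN₂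
    constructor <;> nlinarith
  · have h1' : (1 : ℤ) ≤ m := by exact_mod_cast h1
    have h2' : (m : ℤ) ≤ N₂ := by exact_mod_cast h2
    constructor <;> nlinarith

theorem mem_diffCoarray_nestedArray (hN₂ : 1 ≤ N₂) {d : ℤ}
    (hd : d ∈ Icc 0 ((N₂ : ℤ) * (N₁ + 1) - 1)) : d ∈ diffCoarray (nestedArray N₁ N₂) := by
  rw [mem_Icc] at hd
  have hpos : (0 : ℤ) < N₁ + 1 := by positivity
  have hdiv := Int.mul_ediv_add_emod d (N₁ + 1)
  have hr0 := Int.emod_nonneg d hpos.ne'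
  have hr1 := Int.emod_lt_of_pos d hpos
  have hq0 : 0 ≤ d / (N₁ + 1) := Int.ediv_nonneg hd.1 hpos.le
  have hqN : d / (N₁ + 1) < N₂ := Int.ediv_lt_of_lt_mul hpos (by linarith)
  lift d / (N₁ + 1) to ℕ using hq0 with q hq
  refine mem_diffCoarray.2 ⟨_, mul_sub_one_mem_nestedArray (m := q + 1) (by omega)
    (by omega), _, mem_nestedArray_of_le hN₂ (x := N₁ - d % (N₁ + 1)) (by omega) (by omega),
    ?_⟩
  push_cast
  linarith

end nestedArray

theorem nested_array_holefree_general
    (N₁ N₂ : ℕ) (h₂ : 1 ≤ N₂)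
    (S : Finset ℤ)
    (hS : S = (Finset.range N₁).image (fun n : ℕ => (n : ℤ)) ∪
      (Finset.Icc 1 N₂).image (fun n : ℕ => (n : ℤ) * (N₁ + 1) - 1)) :
    diffCoarray S =
      Finset.Icc (-((N₂ : ℤ) * (N₁ + 1) - 1)) ((N₂ : ℤ) * (N₁ + 1) - 1) ∧
    (diffCoarray S).card = 2 * N₂ * (N₁ + 1) - 1 := by
  obtain rfl : S = nestedArray N₁ N₂ := hS
  have hD := diffCoarray_eq_Icc (nestedArray_subset_Icc (N₁ := N₁) h₂)
    fun _ hd => mem_diffCoarray_nestedArray h₂ hd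
  refine ⟨hD, ?_⟩
  have hcard := card_Icc_neg_natCast_sub_one (N₂ * (N₁ + 1))
  push_cast at hcard
  rw [hD, hcard, mul_assoc]

theorem nested_array_holefree
    (N₁ N₂ : ℕ) (h₁ : 1 ≤ N₁) (h₂ : 1 ≤ N₂)
    (S : Finset ℤ)
    (hS : S = (Finset.range N₁).image (fun n : ℕ => (n : ℤ)) ∪
      (Finset.Icc 1 N₂).image (fun n : ℕ => (n : ℤ) * (N₁ + 1) - 1)) :
    diffCoarray S =
      Finset.Icc (-((N₂ : ℤ) * (N₁ + 1) - 1)) ((N₂ : ℤ) * (N₁ + 1) - 1) ∧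
    (diffCoarray S).card = 2 * N₂ * (N₁ + 1) - 1 :=
  nested_array_holefree_general N₁ N₂ h₂ S hS
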